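/- arXiv:1606.06917 — 2 statements merged into one kernel-verified Lean document; each statement's English description precedes it below -/
import Mathlib

section
/- Let L ≥ 1, η, ξ₊, ξ₋ ∈ ℂ, and let x_1,…,x_L, z_1,…,z_L ∈ ℂ be nonzero with x_1²,…,x_L² pairwise distinct, z_1²,…,z_L² pairwise distinct, and (z_i ± η/2)² ≠ x_k² and (x_i ± η/2)² ≠ z_k² for all i,k. Then A_{{z}}[f_{ξ₊,ξ₋,{x}}] = (−1)^L · A_{{x}}[f_{−ξ₊+η/2, −ξ₋+η/2, {z}}]. -/
open Finset

/-- `A_{{u}}[f]` as a ratio of determinants. -/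
noncomputable def Afun {L : ℕ} (η : ℂ) (u : Fin L → ℂ) (f : ℂ → ℂ) : ℂ :=
  Matrix.det (Matrix.of fun i j : Fin L =>
      f (u i) * (u i + η / 2) ^ (2 * (j : ℕ)) + f (-u i) * (u i - η / 2) ^ (2 * (j : ℕ)))
    / Matrix.det (Matrix.of fun i j : Fin L => u i ^ (2 * (j : ℕ)))

/-- `f_{ξ₊,ξ₋,{v}}(λ) = ((λ+ξ₊)(λ+ξ₋)/λ) ∏_m (λ²−v_m²)/((λ+η/2)²−v_m²)`. -/
noncomputable def fFun (η ξp ξm : ℂ) {M : ℕ} (v : Fin M → ℂ) (lam : ℂ) : ℂ :=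
  ((lam + ξp) * (lam + ξm) / lam) *
    ∏ m, ((lam ^ 2 - v m ^ 2) / ((lam + η / 2) ^ 2 - v m ^ 2))

/-!
Expand `f_{ξ₊,ξ₋,{w}}(±u)` in partial fractions in `w_j²` and sum against the Lagrange weights
of the nodes `w_j²`: the numerator matrix of `A_{{u}}` factors as
`diag(∏ₘ (u_i² - w_m²)) · K(u, w) · diag(weights) · V(w²)` with `K_ij = crossKernel (u i) (w j)`.
Hence `A_{{u}}[f_{ξ₊,ξ₋,{w}}] = ∏_{i,m} (u_i² - w_m²) · det K(u, w) / (c_L · det V(w²) · det V(u²))`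
with a sign `c_L` depending only on `L`. The kernel is symmetric under `u ↔ w` together with
`ξ± ↦ -ξ± + η/2`, so both sides of the theorem involve the same determinant `det K(z, x)`, and
the double products of differences differ by `(-1)^(L²) = (-1)^L`.
-/

open Polynomial in
theorem Lagrange.sum_nodalWeight_mul_pow_div_sub {F ι : Type*} [Field F] [DecidableEq ι]
    {s : Finset ι} {v : ι → F} (hvs : Set.InjOn v s) {k : ℕ} (hk : k < #s) {t : F}
    (ht : ∀ i ∈ s, t ≠ v i) :
    ∑ i ∈ s, nodalWeight s v i * v i ^ k / (t - v i) = t ^ k / ∏ i ∈ s, (t - v i) := by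
  have hdeg : (X ^ k : F[X]).degree < #s := by
    rw [degree_X_pow]
    exact_mod_cast hk
  have key := eval_interpolate_not_at_node (fun i => v i ^ k) ht
  rw [show (fun i => v i ^ k) = fun i => (X ^ k : F[X]).eval (v i) by simp,
    ← eq_interpolate hvs hdeg, eval_nodal] at key
  simp only [eval_pow, eval_X] at key
  rw [eq_div_iff (prod_ne_zero_iff.mpr fun i hi => sub_ne_zero.mpr (ht i hi)), key, mul_comm]
  exact congrArg _ (sum_congr rfl fun i _ => by ring)

theorem Finset.prod_prod_erase_eq_prod_prod_Ioi {ι M : Type*} [CommMonoid M] [Fintype ι]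
    [LinearOrder ι] [LocallyFiniteOrderTop ι] [LocallyFiniteOrderBot ι] (g : ι → ι → M) :
    ∏ j, ∏ m ∈ univ.erase j, g j m = ∏ i, ∏ j ∈ Ioi i, g i j * g j i := by
  have herase (j : ι) : univ.erase j = Iio j ∪ Ioi j := by
    ext m
    simp [lt_or_lt_iff_ne]
  have hswap : ∏ j, ∏ m ∈ Iio j, g j m = ∏ i, ∏ j ∈ Ioi i, g j i :=
    prod_comm' fun j m => by simp
  simp_rw [herase, prod_union (disjoint_left.mpr fun m h₁ h₂ =>
      (mem_Iio.mp h₁).not_gt (mem_Ioi.mp h₂)), prod_mul_distrib, hswap, mul_comm]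

theorem Finset.prod_prod_sub_comm {ι κ R : Type*} [Fintype ι] [Fintype κ] [CommRing R]
    (a : ι → R) (b : κ → R) :
    ∏ i, ∏ j, (a i - b j)
      = (-1) ^ (Fintype.card ι * Fintype.card κ) * ∏ j, ∏ i, (b j - a i) := by
  calc ∏ i, ∏ j, (a i - b j) = ∏ i, ∏ j, ((-1) * (b j - a i)) := by simp
    _ = _ := by
      rw [prod_comm (f := fun j i => b j - a i)]
      simp only [prod_mul_distrib, prod_const, card_univ, ← pow_mul, mul_comm (Fintype.card κ)]

theorem Matrix.prod_prod_erase_sub_eq_det_vandermonde_sq {R : Type*} [CommRing R] {n : ℕ}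
    (v : Fin n → R) :
    ∏ j, ∏ m ∈ univ.erase j, (v j - v m)
      = (∏ j : Fin n, (-1) ^ #(Ioi j)) * (vandermonde v).det ^ 2 := by
  rw [prod_prod_erase_eq_prod_prod_Ioi, det_vandermonde, ← prod_pow, ← prod_mul_distrib]
  refine prod_congr rfl fun i _ => ?_
  rw [← prod_pow, ← prod_const, ← prod_mul_distrib]
  exact prod_congr rfl fun j _ => by ring

theorem Matrix.prod_nodalWeight_mul_det_vandermonde {F : Type*} [Field F] {n : ℕ}
    (v : Fin n → F) :
    (∏ j, Lagrange.nodalWeight univ v j) * (vandermonde v).det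
      = ((∏ j : Fin n, (-1) ^ #(Ioi j)) * (vandermonde v).det)⁻¹ := by
  simp only [Lagrange.nodalWeight, prod_inv_distrib]
  rw [prod_prod_erase_sub_eq_det_vandermonde_sq]
  rcases eq_or_ne (vandermonde v).det 0 with h | h
  · simp [h]
  · field_simp

theorem Matrix.of_pow_two_mul_eq_vandermonde {R : Type*} [CommRing R] {n : ℕ} (u : Fin n → R) :
    Matrix.of (fun i j : Fin n => u i ^ (2 * (j : ℕ))) = vandermonde fun i => u i ^ 2 := by
  ext i j
  rw [of_apply, vandermonde_apply, pow_mul]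

noncomputable def crossKernel (η ξp ξm u w : ℂ) : ℂ :=
  (2 * (ξp + ξm - η) * u ^ 2 + (ξp + ξm) * η ^ 2 / 2 - 2 * η * ξp * ξm
      - 2 * (ξp + ξm) * w ^ 2)
    / (((u + η / 2) ^ 2 - w ^ 2) * ((u - η / 2) ^ 2 - w ^ 2))

section

variable {L : ℕ} {η ξp ξm : ℂ}

theorem crossKernel_eq_add {u w : ℂ} (hu : u ≠ 0) (hp : (u + η / 2) ^ 2 ≠ w ^ 2)
    (hm : (u - η / 2) ^ 2 ≠ w ^ 2) :
    crossKernel η ξp ξm u w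
      = (u + ξp) * (u + ξm) / u / ((u + η / 2) ^ 2 - w ^ 2)
        + (-u + ξp) * (-u + ξm) / -u / ((u - η / 2) ^ 2 - w ^ 2) := by
  rw [← sub_ne_zero] at hp hm
  rw [crossKernel, div_neg, neg_div, ← sub_eq_add_neg, div_div, div_div,
    div_sub_div _ _ (mul_ne_zero hu hp) (mul_ne_zero hu hm)]
  field_simp
  ring

theorem crossKernel_swap (u w : ℂ) :
    crossKernel η (-ξp + η / 2) (-ξm + η / 2) w u = crossKernel η ξp ξm u w := by
  rw [crossKernel, crossKernel]
  congr 1 <;> ring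

theorem fFun_eq_mul_div {M : ℕ} (v : Fin M → ℂ) (lam : ℂ) :
    fFun η ξp ξm v lam = (lam + ξp) * (lam + ξm) / lam
      * ((∏ m, (lam ^ 2 - v m ^ 2)) / ∏ m, ((lam + η / 2) ^ 2 - v m ^ 2)) := by
  rw [fFun, prod_div_distrib]

theorem fFun_matrix_eq_mul {u w : Fin L → ℂ} (hu : ∀ i, u i ≠ 0)
    (hw : ∀ i j, i ≠ j → w i ^ 2 ≠ w j ^ 2)
    (huw : ∀ i k, (u i + η / 2) ^ 2 ≠ w k ^ 2 ∧ (u i - η / 2) ^ 2 ≠ w k ^ 2) :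
    Matrix.of (fun i k : Fin L => fFun η ξp ξm w (u i) * (u i + η / 2) ^ (2 * (k : ℕ))
        + fFun η ξp ξm w (-u i) * (u i - η / 2) ^ (2 * (k : ℕ)))
      = Matrix.diagonal (fun i => ∏ m, (u i ^ 2 - w m ^ 2))
        * Matrix.of (fun i j => crossKernel η ξp ξm (u i) (w j))
        * Matrix.diagonal (Lagrange.nodalWeight univ fun j => w j ^ 2)
        * Matrix.vandermonde (fun j => w j ^ 2) := by
  ext i k
  have hinj : Set.InjOn (fun j => w j ^ 2) (univ : Finset (Fin L)) :=
    fun a _ b _ h => by_contra fun hab => hw a b hab h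
  have lagrange (t : ℂ) (ht : ∀ j, t ≠ w j ^ 2) :=
    Lagrange.sum_nodalWeight_mul_pow_div_sub hinj (k := k) (by simp) (fun j _ => ht j)
  have hfm : fFun η ξp ξm w (-u i) = (-u i + ξp) * (-u i + ξm) / -u i
      * ((∏ m, (u i ^ 2 - w m ^ 2)) / ∏ m, ((u i - η / 2) ^ 2 - w m ^ 2)) := by
    rw [fFun_eq_mul_div, neg_sq, show -u i + η / 2 = -(u i - η / 2) by ring, neg_sq]
  rw [Matrix.mul_apply]
  simp only [Matrix.mul_diagonal, Matrix.diagonal_mul, Matrix.of_apply, Matrix.vandermonde_apply]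
  simp_rw [crossKernel_eq_add (hu i) (huw i _).1 (huw i _).2]
  rw [hfm, fFun_eq_mul_div, pow_mul, pow_mul]
  set A := (u i + η / 2) ^ 2
  set B := (u i - η / 2) ^ 2
  set gp := (u i + ξp) * (u i + ξm) / u i
  set gm := (-u i + ξp) * (-u i + ξm) / -u i
  set P := ∏ m, (u i ^ 2 - w m ^ 2)
  set ν := Lagrange.nodalWeight univ fun j => w j ^ 2
  have hsplit (j : Fin L) :
      P * (gp / (A - w j ^ 2) + gm / (B - w j ^ 2)) * ν j * (w j ^ 2) ^ (k : ℕ)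
        = P * gp * (ν j * (w j ^ 2) ^ (k : ℕ) / (A - w j ^ 2))
          + P * gm * (ν j * (w j ^ 2) ^ (k : ℕ) / (B - w j ^ 2)) := by
    ring
  rw [sum_congr rfl fun j _ => hsplit j, sum_add_distrib, ← mul_sum, ← mul_sum,
    lagrange A fun j => (huw i j).1, lagrange B fun j => (huw i j).2]
  ring

theorem Afun_fFun_eq {u w : Fin L → ℂ} (hu : ∀ i, u i ≠ 0)
    (hw : ∀ i j, i ≠ j → w i ^ 2 ≠ w j ^ 2)
    (huw : ∀ i k, (u i + η / 2) ^ 2 ≠ w k ^ 2 ∧ (u i - η / 2) ^ 2 ≠ w k ^ 2) :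
    Afun η u (fFun η ξp ξm w)
      = (∏ i, ∏ m, (u i ^ 2 - w m ^ 2))
          * (Matrix.of fun i j => crossKernel η ξp ξm (u i) (w j)).det
        / ((∏ j : Fin L, (-1) ^ #(Ioi j)) * (Matrix.vandermonde fun j => w j ^ 2).det
          * (Matrix.vandermonde fun i => u i ^ 2).det) := by
  rw [Afun, fFun_matrix_eq_mul hu hw huw, Matrix.of_pow_two_mul_eq_vandermonde, Matrix.det_mul,
    Matrix.det_mul, Matrix.det_mul, Matrix.det_diagonal, Matrix.det_diagonal,
    mul_assoc _ (∏ j, _), Matrix.prod_nodalWeight_mul_det_vandermonde]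
  ring

end

theorem stmt11_general (L : ℕ) (η ξp ξm : ℂ)
    (x z : Fin L → ℂ)
    (hx0 : ∀ i, x i ≠ 0) (hz0 : ∀ i, z i ≠ 0)
    (hx : ∀ i j, i ≠ j → x i ^ 2 ≠ x j ^ 2)
    (hz : ∀ i j, i ≠ j → z i ^ 2 ≠ z j ^ 2)
    (hzx : ∀ i k, (z i + η / 2) ^ 2 ≠ x k ^ 2 ∧ (z i - η / 2) ^ 2 ≠ x k ^ 2)
    (hxz : ∀ i k, (x i + η / 2) ^ 2 ≠ z k ^ 2 ∧ (x i - η / 2) ^ 2 ≠ z k ^ 2) :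
    Afun η z (fFun η ξp ξm x)
      = (-1 : ℂ) ^ L * Afun η x (fFun η (-ξp + η / 2) (-ξm + η / 2) z) := by
  have hkernel : (Matrix.of fun i j => crossKernel η (-ξp + η / 2) (-ξm + η / 2) (x i) (z j))
      = (Matrix.of fun i j => crossKernel η ξp ξm (z i) (x j)).transpose := by
    ext i j
    exact crossKernel_swap (z j) (x i)
  have hswap : Afun η x (fFun η (-ξp + η / 2) (-ξm + η / 2) z)
      = (-1) ^ (L * L) * Afun η z (fFun η ξp ξm x) := by
    rw [Afun_fFun_eq hz0 hx hzx, Afun_fFun_eq hx0 hz hxz, hkernel, Matrix.det_transpose,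
      prod_prod_sub_comm (fun i => x i ^ 2), Fintype.card_fin]
    ring
  have hsign : (-1 : ℂ) ^ L * (-1) ^ (L * L) = 1 := by
    rw [← pow_add, show L + L * L = L * (L + 1) by ring, (Nat.even_mul_succ_self L).neg_one_pow]
  rw [hswap, ← mul_assoc, hsign, one_mul]

theorem stmt11 (L : ℕ) (hL : 1 ≤ L) (η ξp ξm : ℂ)
    (x z : Fin L → ℂ)
    (hx0 : ∀ i, x i ≠ 0) (hz0 : ∀ i, z i ≠ 0)
    (hx : ∀ i j, i ≠ j → x i ^ 2 ≠ x j ^ 2)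
    (hz : ∀ i j, i ≠ j → z i ^ 2 ≠ z j ^ 2)
    (hzx : ∀ i k, (z i + η / 2) ^ 2 ≠ x k ^ 2 ∧ (z i - η / 2) ^ 2 ≠ x k ^ 2)
    (hxz : ∀ i k, (x i + η / 2) ^ 2 ≠ z k ^ 2 ∧ (x i - η / 2) ^ 2 ≠ z k ^ 2) :
    Afun η z (fFun η ξp ξm x)
      = (-1 : ℂ) ^ L * Afun η x (fFun η (-ξp + η / 2) (-ξm + η / 2) z) :=
  stmt11_general L η ξp ξm x z hx0 hz0 hx hz hzx hxz
end

section
/- Let M, S ≥ 0 be integers with M+S ≥ 1, let η ∈ ℂ, and let x_1,…,x_M, w_1,…,w_S ∈ ℂ. Set X^{(±)}(λ) := ∏_{ℓ=1}^M [λ² − (x_ℓ ± η/2)²], X_k^{(±)}(λ) := X^{(±)}(λ)/(λ² − (x_k ± η/2)²), and W_k(λ) := ∏_{ℓ≠k}(λ²−w_ℓ²). Let C̃ be the (2M+S)×(2M+S) matrix of coefficients defined by the expansions in powers λ^{2(j−1)}, j = 1,…,2M+S: X^{(+)}(λ) X_k^{(−)}(λ) = ∑_j C̃_{j,k} λ^{2(j−1)}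 for 1 ≤ k ≤ M; X_k^{(+)}(λ) X^{(−)}(λ) = ∑_j C̃_{j,M+k} λ^{2(j−1)} for 1 ≤ k ≤ M; X^{(+)}(λ) X^{(−)}(λ) W_k(λ) = ∑_j C̃_{j,2M+k} λ^{2(j−1)} for 1 ≤ k ≤ S. Then det C̃ = ∏_{1≤a<b≤S}(w_a² − w_b²) · V̂(x_M+η/2, …, x_1+η/2, x_M−η/2, …, x_1−η/2). -/
open Finset

/-- `V̂(u_1,…,u_K) = ∏_{j<k}(u_k² − u_j²)`. -/
noncomputable def Vhat {K : ℕ} (u : Fin K → ℂ) : ℂ :=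
  ∏ j, ∏ k ∈ Finset.Ioi j, (u k ^ 2 - u j ^ 2)

open Polynomial Matrix

/-! Write `t = λ²` and `ρ = ((x_l - η/2)²)_l ++ ((x_l + η/2)²)_l`. The first `2M` columns of `C̃`
are the coefficient vectors of `∏_{l ≠ k} (t - ρ_l)`, of degree `< 2M`, and the last `S` those of
`Q · W_k` with `Q = ∏_l (t - ρ_l)` monic of degree `2M`, so `C̃` is block upper triangular.
The Vandermonde matrix of `r` times the coefficient matrix of the `∏_{l ≠ k} (t - r_l)` is the
diagonal matrix of the `∏_{l ≠ k} (r_k - r_l)`, which gives that block determinant as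
`∏_{j < k} (r_j - r_k)` when the `r_k` are distinct (otherwise two columns agree). Multiplication by
`Q` acts on the top `S` coefficients through a unitriangular matrix, so the lower block reduces to
the same computation for the `w_k²`. -/

namespace Fin

theorem castAdd_ne_natAdd {m n : ℕ} (i : Fin m) (j : Fin n) : castAdd n i ≠ natAdd m j :=
  fun h => by have := congrArg Fin.val h; simp at this; omega

theorem prod_prod_Ioi_rev {M : Type*} [CommMonoid M] {n : ℕ} (f : Fin n → Fin n → M) :
    ∏ j, ∏ k ∈ Ioi j, f (rev j) (rev k) = ∏ j, ∏ k ∈ Ioi j, f k j := by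
  rw [prod_sigma', prod_sigma']
  refine prod_nbij' (fun p => ⟨p.2.rev, p.1.rev⟩) (fun p => ⟨p.2.rev, p.1.rev⟩) ?_ ?_ ?_ ?_ ?_ <;>
    simp

theorem prod_erase_castAdd_append {α β : Type*} [CommMonoid β] {m n : ℕ} (g : α → β)
    (u : Fin m → α) (v : Fin n → α) (k : Fin m) :
    ∏ l ∈ univ.erase (castAdd n k), g (append u v l) =
      (∏ l ∈ univ.erase k, g (u l)) * ∏ l, g (v l) := by
  simp_rw [← filter_ne', prod_filter, Fin.prod_univ_add, append_left, append_right]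
  simp [(castAdd_ne_natAdd _ _).symm]

theorem prod_erase_natAdd_append {α β : Type*} [CommMonoid β] {m n : ℕ} (g : α → β)
    (u : Fin m → α) (v : Fin n → α) (k : Fin n) :
    ∏ l ∈ univ.erase (natAdd m k), g (append u v l) =
      (∏ l, g (u l)) * ∏ l ∈ univ.erase k, g (v l) := by
  simp_rw [← filter_ne', prod_filter, Fin.prod_univ_add, append_left, append_right]
  simp [castAdd_ne_natAdd]

end Fin

namespace Polynomial
variable {R : Type*} [CommRing R]

def coeffMatrix {n : ℕ} (f : Fin n → R[X]) (d : ℕ) : Matrix (Fin n) (Fin n) R :=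
  of fun j k => (f k).coeff (d + j)

@[simp]
theorem coeffMatrix_apply {n : ℕ} (f : Fin n → R[X]) (d : ℕ) (j k : Fin n) :
    coeffMatrix f d j k = (f k).coeff (d + j) := rfl

theorem vandermonde_mul_coeffMatrix {n : ℕ} (v : Fin n → R) (f : Fin n → R[X])
    (hf : ∀ k, (f k).natDegree < n) :
    vandermonde v * coeffMatrix f 0 = of fun i k => (f k).eval (v i) := by
  ext i k
  simp only [mul_apply, vandermonde_apply, coeffMatrix_apply, zero_add, of_apply,
    eval_eq_sum_range' (hf k), Fin.sum_univ_eq_sum_range (fun j => v i ^ j * (f k).coeff j),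
    mul_comm]

theorem eval_prod_erase_X_sub_C {ι : Type*} [Fintype ι] [DecidableEq ι] (r : ι → R) (i k : ι) :
    (∏ l ∈ univ.erase k, (X - C (r l))).eval (r i) =
      if i = k then ∏ l ∈ univ.erase i, (r i - r l) else 0 := by
  split_ifs with h
  · subst h; simp [eval_prod]
  · exact (eval_prod _ _ _).trans
      (prod_eq_zero (mem_erase.mpr ⟨h, mem_univ i⟩) (by simp))

theorem natDegree_prod_erase_X_sub_C_lt [Nontrivial R] {n : ℕ} (r : Fin n → R) (k : Fin n) :
    (∏ l ∈ univ.erase k, (X - C (r l))).natDegree < n := by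
  simp [card_erase_of_mem, k.pos]

theorem prod_erase_X_sub_C_eq_of_eq [IsDomain R] {ι : Type*} [Fintype ι] [DecidableEq ι]
    {r : ι → R} {i k : ι} (h : r i = r k) :
    ∏ l ∈ univ.erase i, (X - C (r l)) = ∏ l ∈ univ.erase k, (X - C (r l)) := by
  apply mul_left_cancel₀ (X_sub_C_ne_zero (r i))
  rw [mul_prod_erase _ (fun l => X - C (r l)) (mem_univ i), h,
    mul_prod_erase _ (fun l => X - C (r l)) (mem_univ k)]

theorem det_coeffMatrix_prod_erase_X_sub_C [IsDomain R] {n : ℕ} (r : Fin n → R) :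
    det (coeffMatrix (fun k => ∏ l ∈ univ.erase k, (X - C (r l))) 0) =
      ∏ j, ∏ k ∈ Ioi j, (r j - r k) := by
  by_cases hr : Function.Injective r
  · have hdiag : vandermonde r * coeffMatrix (fun k => ∏ l ∈ univ.erase k, (X - C (r l))) 0
        = diagonal fun i => ∏ l ∈ univ.erase i, (r i - r l) := by
      rw [vandermonde_mul_coeffMatrix _ _ (natDegree_prod_erase_X_sub_C_lt r)]
      ext i k
      simp [eval_prod_erase_X_sub_C, diagonal_apply]
    have hdiag_prod : ∏ i, ∏ l ∈ univ.erase i, (r i - r l)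
        = det (vandermonde r) * ∏ j, ∏ k ∈ Ioi j, (r j - r k) := by
      simp_rw [← compl_singleton, ← prod_prod_Ioi_mul_eq_prod_prod_off_diag, prod_mul_distrib,
        det_vandermonde, mul_comm]
    have hdet := congrArg det hdiag
    rw [det_mul, det_diagonal, hdiag_prod] at hdet
    exact mul_left_cancel₀ (det_vandermonde_ne_zero_iff.mpr hr) hdet
  · obtain ⟨i, k, hik, hne⟩ : ∃ i k, r i = r k ∧ i < k := by
      obtain ⟨i, k, h, hne⟩ := Function.not_injective_iff.mp hr
      rcases hne.lt_or_gt with hlt | hlt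
      exacts [⟨i, k, h, hlt⟩, ⟨k, i, h.symm, hlt⟩]
    rw [prod_eq_zero (mem_univ i) (prod_eq_zero (mem_Ioi.mpr hne) (sub_eq_zero.mpr hik))]
    exact det_zero_of_column_eq hne.ne fun j => by
      simp only [coeffMatrix_apply, prod_erase_X_sub_C_eq_of_eq hik]

theorem coeff_mul_eq_sum_coeff_mul_X_pow {n : ℕ} (Q g : R[X]) (hg : g.natDegree < n) (m : ℕ) :
    (Q * g).coeff m = ∑ i : Fin n, (Q * X ^ (i : ℕ)).coeff m * g.coeff i := by
  conv_lhs => rw [g.as_sum_range' n hg]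
  simp only [mul_sum, finsetSum_coeff, ← C_mul_X_pow_eq_monomial, mul_left_comm Q, coeff_C_mul,
    mul_comm (g.coeff _)]
  exact (Fin.sum_univ_eq_sum_range (fun i => (Q * X ^ i).coeff m * g.coeff i) n).symm

theorem det_coeffMatrix_monic_mul {n : ℕ} {Q : R[X]} (hQ : Q.Monic) (g : Fin n → R[X])
    (hg : ∀ k, (g k).natDegree < n) :
    det (coeffMatrix (fun k => Q * g k) Q.natDegree) = det (coeffMatrix g 0) := by
  have hfactor : coeffMatrix (fun k => Q * g k) Q.natDegree =
      coeffMatrix (fun i : Fin n => Q * X ^ (i : ℕ)) Q.natDegree * coeffMatrix g 0 := by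
    ext j k
    simp only [coeffMatrix_apply, mul_apply, zero_add, coeff_mul_eq_sum_coeff_mul_X_pow Q (g k) (hg k)]
  have hunitriangular : det (coeffMatrix (fun i : Fin n => Q * X ^ (i : ℕ)) Q.natDegree) = 1 := by
    rw [det_of_isUpperTriangular]
    · exact prod_eq_one fun i _ => by simpa [coeff_mul_X_pow] using hQ.coeff_natDegree
    · intro j i (hij : i < j)
      rw [coeffMatrix_apply, coeff_mul_X_pow', if_pos (by omega)]
      exact coeff_eq_zero_of_natDegree_lt (by omega)
  rw [hfactor, det_mul, hunitriangular, one_mul]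

theorem det_coeffMatrix_append {m n : ℕ} (f : Fin m → R[X]) (hf : ∀ k, (f k).natDegree < m)
    (g : Fin n → R[X]) :
    det (coeffMatrix (Fin.append f g) 0) = det (coeffMatrix f 0) * det (coeffMatrix g m) := by
  have hblocks : (coeffMatrix (Fin.append f g) 0).submatrix finSumFinEquiv finSumFinEquiv =
      fromBlocks (coeffMatrix f 0) (of fun j k => (g k).coeff j) 0 (coeffMatrix g m) := by
    ext (j | j) (k | k)
    case inr.inl =>
      simpa using coeff_eq_zero_of_natDegree_lt ((hf k).trans_le (Nat.le_add_right m j))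
    all_goals simp
  rw [← det_submatrix_equiv_self finSumFinEquiv, hblocks, det_fromBlocks_zero₂₁]

theorem det_coeffMatrix_prod_X_sub_C_mul [Nontrivial R] {m n : ℕ} (s : Fin m → R)
    (g : Fin n → R[X]) (hg : ∀ k, (g k).natDegree < n) :
    det (coeffMatrix (fun k => (∏ l, (X - C (s l))) * g k) m) = det (coeffMatrix g 0) := by
  simpa using det_coeffMatrix_monic_mul (monic_prod_X_sub_C s univ) g hg

theorem coeff_eq_of_forall_eval_sq {K : Type*} [Field K] [IsAlgClosed K] {n : ℕ} (P : K[X])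
    (c : Fin n → K) (h : ∀ t, P.eval (t ^ 2) = ∑ j, c j * t ^ (2 * (j : ℕ))) (j : Fin n) :
    c j = P.coeff j := by
  have hP : P = ∑ j, C (c j) * X ^ (j : ℕ) := funext fun s => by
    obtain ⟨t, rfl⟩ := IsAlgClosed.exists_pow_nat_eq s two_pos
    simp [h, eval_finsetSum, pow_mul]
  simp [hP, finsetSum_coeff, Fin.val_inj]

end Polynomial

theorem Vhat_eq_of_sq_eq_rev {K : ℕ} {u ρ : Fin K → ℂ} (h : ∀ i, u i ^ 2 = ρ (Fin.rev i)) :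
    Vhat u = ∏ j, ∏ k ∈ Ioi j, (ρ j - ρ k) := by
  simp_rw [Vhat, h]
  exact Fin.prod_prod_Ioi_rev fun j k => ρ k - ρ j

theorem Vhat_append_rev {M : ℕ} (p q : Fin M → ℂ) :
    Vhat (Fin.append (fun i => p (Fin.rev i)) (fun i => q (Fin.rev i))) =
      ∏ j, ∏ k ∈ Ioi j,
        (Fin.append (q · ^ 2) (p · ^ 2) j - Fin.append (q · ^ 2) (p · ^ 2) k) := by
  refine Vhat_eq_of_sq_eq_rev fun i => ?_
  induction i using Fin.addCases with
  | left i => rw [Fin.append_left, Fin.rev_castAdd, ← Fin.natAdd_eq_addNat, Fin.append_right]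
  | right i =>
    rw [Fin.append_right, Fin.natAdd_eq_addNat, Fin.rev_addNat, Fin.append_left]

theorem stmt19 (M S : ℕ) (η : ℂ)
    (x : Fin M → ℂ) (w : Fin S → ℂ)
    (Ct : Matrix (Fin (2 * M + S)) (Fin (2 * M + S)) ℂ)
    (hC1 : ∀ (k : Fin M) (lam : ℂ),
      (∏ l, (lam ^ 2 - (x l + η / 2) ^ 2)) *
          ∏ l ∈ Finset.univ.erase k, (lam ^ 2 - (x l - η / 2) ^ 2)
        = ∑ j, Ct j ⟨(k : ℕ), by have := k.isLt; omega⟩ * lam ^ (2 * (j : ℕ)))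
    (hC2 : ∀ (k : Fin M) (lam : ℂ),
      (∏ l ∈ Finset.univ.erase k, (lam ^ 2 - (x l + η / 2) ^ 2)) *
          ∏ l, (lam ^ 2 - (x l - η / 2) ^ 2)
        = ∑ j, Ct j ⟨M + (k : ℕ), by have := k.isLt; omega⟩ * lam ^ (2 * (j : ℕ)))
    (hC3 : ∀ (k : Fin S) (lam : ℂ),
      (∏ l, (lam ^ 2 - (x l + η / 2) ^ 2)) *
          (∏ l, (lam ^ 2 - (x l - η / 2) ^ 2)) *
          ∏ l ∈ Finset.univ.erase k, (lam ^ 2 - w l ^ 2)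
        = ∑ j, Ct j ⟨2 * M + (k : ℕ), by have := k.isLt; omega⟩ * lam ^ (2 * (j : ℕ))) :
    Ct.det
      = (∏ a, ∏ b ∈ Finset.Ioi a, (w a ^ 2 - w b ^ 2)) *
        Vhat (Fin.append (fun i : Fin M => x (Fin.rev i) + η / 2)
                         (fun i : Fin M => x (Fin.rev i) - η / 2)) := by
  set ρ : Fin (M + M) → ℂ := Fin.append (fun l => (x l - η / 2) ^ 2) (fun l => (x l + η / 2) ^ 2)
  set F : Fin (M + M) → ℂ[X] := fun k => ∏ l ∈ univ.erase k, (X - C (ρ l))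
  set G : Fin S → ℂ[X] := fun k => (∏ l, (X - C (ρ l))) * ∏ l ∈ univ.erase k, (X - C (w l ^ 2))
  have hsize : M + M + S = 2 * M + S := by ring
  have hcol : ∀ k t, (Fin.append F G k).eval (t ^ 2) =
      ∑ j, Ct j (Fin.cast hsize k) * t ^ (2 * (j : ℕ)) := by
    intro k t
    induction k using Fin.addCases with
    | left k =>
      induction k using Fin.addCases with
      | left k =>
        simp only [Fin.append_left, F, eval_prod, eval_sub, eval_X, eval_C]
        rw [Fin.prod_erase_castAdd_append (t ^ 2 - ·), mul_comm]
        exact hC1 k t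
      | right k =>
        simp only [Fin.append_left, F, eval_prod, eval_sub, eval_X, eval_C]
        rw [Fin.prod_erase_natAdd_append (t ^ 2 - ·), mul_comm]
        exact hC2 k t
    | right k =>
      simp only [Fin.append_right, G, eval_mul, eval_prod, eval_sub, eval_X, eval_C,
        Fin.prod_univ_add, ρ, Fin.append_left, Fin.append_right]
      rw [mul_comm (∏ l, _) (∏ l, _),
        show Fin.cast hsize (Fin.natAdd (M + M) k) = ⟨2 * M + k, by omega⟩ from Fin.ext (by simp)]
      exact hC3 k t
  have hCt : Ct = reindex (finCongr hsize) (finCongr hsize) (coeffMatrix (Fin.append F G) 0) := by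
    ext j k
    obtain ⟨k, rfl⟩ := (finCongr hsize).surjective k
    simpa using coeff_eq_of_forall_eval_sq _ _ (hcol k) j
  rw [hCt, det_reindex_self, det_coeffMatrix_append F (natDegree_prod_erase_X_sub_C_lt ρ),
    det_coeffMatrix_prod_erase_X_sub_C,
    det_coeffMatrix_prod_X_sub_C_mul _ _ (natDegree_prod_erase_X_sub_C_lt _),
    det_coeffMatrix_prod_erase_X_sub_C,
    Vhat_append_rev (fun l => x l + η / 2) (fun l => x l - η / 2), mul_comm]
end
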